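/- arXiv:1906.09103 — 5 statements merged into one kernel-verified Lean document; each statement's English description precedes it below -/
import Mathlib

section
/- Let Ω ⊆ ℝⁿ be open and convex, α > 0, and φ : Ω → ℝ differentiable with e^{αφ} concave on Ω. Then for all ξ, ξ' ∈ Ω, the logarithmic divergence L^{(α)}_φ[ξ:ξ'] := (1/α) log(1 + α ∇φ(ξ')·(ξ − ξ')) − (φ(ξ) − φ(ξ')) is nonnegative. -/
/-! The concave function `exp (α * φ)` lies below its tangent hyperplane at `ξ'`, i.e.
`exp (α * φ ξ) ≤ exp (α * φ ξ') * (1 + α * ⟪∇φ ξ', ξ - ξ'⟫)`; dividing by `exp (α * φ ξ')` and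
taking logarithms gives the inequality. -/

open Real Set
open scoped RealInnerProductSpace

abbrev E (n : ℕ) := EuclideanSpace ℝ (Fin n)

theorem ConcaveOn.le_add_of_hasFDerivAt {F : Type*} [NormedAddCommGroup F] [NormedSpace ℝ F]
    {s : Set F} {f : F → ℝ} {f' : F →L[ℝ] ℝ} {x y : F}
    (hf : ConcaveOn ℝ s f) (hx : x ∈ s) (hy : y ∈ s) (hfx : HasFDerivAt f f' x) :
    f y ≤ f x + f' (y - x) := by
  let ℓ : ℝ →ᵃ[ℝ] F := AffineMap.lineMap x y
  have hline : ConcaveOn ℝ (ℓ ⁻¹' s) (f ∘ ℓ) := hf.comp_affineMap ℓ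
  have hderiv : HasDerivAt (f ∘ ℓ) (f' (y - x)) 0 := by
    have hfx0 : HasFDerivAt f f' (ℓ 0) := by simpa [ℓ] using hfx
    exact hfx0.comp_hasDerivAt (0 : ℝ) AffineMap.hasDerivAt_lineMap
  have hslope := hline.slope_le_of_hasDerivAt (x := 0) (y := 1)
    (by simpa [ℓ] using hx) (by simpa [ℓ] using hy) zero_lt_one hderiv
  simp only [slope_def_field, Function.comp, ℓ, AffineMap.lineMap_apply_zero,
    AffineMap.lineMap_apply_one, sub_zero, div_one] at hslope
  linarith

theorem le_one_div_mul_log_of_exp_mul_le {α a u : ℝ} (hα : 0 < α) (h : exp (α * a) ≤ u) :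
    a ≤ 1 / α * log u := by
  have hlog : α * a ≤ log u := (le_log_iff_exp_le ((exp_pos _).trans_le h)).2 h
  rw [one_div, ← div_eq_inv_mul, le_div_iff₀ hα]
  linarith

theorem log_divergence_nonneg_general (n : ℕ) (Ω : Set (E n))
    (α : ℝ) (hα : 0 < α)
    (φ : E n → ℝ) (Dφ : E n → E n)
    (hdiff : ∀ ξ ∈ Ω, HasGradientAt φ (Dφ ξ) ξ)
    (hconc : ConcaveOn ℝ Ω (fun ξ => Real.exp (α * φ ξ))) :
    ∀ ξ ∈ Ω, ∀ ξ' ∈ Ω,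
      0 ≤ (1 / α) * Real.log (1 + α * ⟪Dφ ξ', ξ - ξ'⟫) - (φ ξ - φ ξ') := by
  intro ξ hξ ξ' hξ'
  have htangent : exp (α * φ ξ) ≤ exp (α * φ ξ') * (1 + α * ⟪Dφ ξ', ξ - ξ'⟫) := by
    have := hconc.le_add_of_hasFDerivAt hξ' hξ (((hdiff ξ' hξ').hasFDerivAt.const_mul α).exp)
    simp only [smul_apply, InnerProductSpace.toDual_apply_apply, smul_eq_mul] at this
    linarith
  have hexp : exp (α * (φ ξ - φ ξ')) ≤ 1 + α * ⟪Dφ ξ', ξ - ξ'⟫ := by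
    rwa [mul_sub, exp_sub, div_le_iff₀' (exp_pos _)]
  linarith [le_one_div_mul_log_of_exp_mul_le hα hexp]

theorem log_divergence_nonneg (n : ℕ) (Ω : Set (E n))
    (hΩopen : IsOpen Ω) (hΩconv : Convex ℝ Ω)
    (α : ℝ) (hα : 0 < α)
    (φ : E n → ℝ) (Dφ : E n → E n)
    (hdiff : ∀ ξ ∈ Ω, HasGradientAt φ (Dφ ξ) ξ)
    (hconc : ConcaveOn ℝ Ω (fun ξ => Real.exp (α * φ ξ))) :
    ∀ ξ ∈ Ω, ∀ ξ' ∈ Ω,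
      0 ≤ (1 / α) * Real.log (1 + α * ⟪Dφ ξ', ξ - ξ'⟫) - (φ ξ - φ ξ') :=
  log_divergence_nonneg_general n Ω α hα φ Dφ hdiff hconc
end

section
/- Let Ω ⊆ ℝⁿ be open and convex, α > 0, and φ : Ω → ℝ differentiable with e^{αφ} strictly concave on Ω. Then L^{(α)}_φ[ξ:ξ'] = 0 if and only if ξ = ξ'. -/
/-!
Restricting `e^{αφ}` to the segment from `ξ'` to `ξ` and using the one-variable fact that a strictly
concave function lies strictly below its tangent line, we get
`e^{αφ(ξ)} < e^{αφ(ξ')} (1 + α ⟪∇φ(ξ'), ξ - ξ'⟫)` for `ξ ≠ ξ'`. Taking logarithms, this says exactly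
that `L^{(α)}_φ[ξ:ξ'] > 0`.
-/

open Real Set
open scoped RealInnerProductSpace

theorem StrictConcaveOn.comp_affineMap_of_injective {𝕜 V W β : Type*} [Field 𝕜] [LinearOrder 𝕜]
    [IsStrictOrderedRing 𝕜] [AddCommGroup V] [Module 𝕜 V] [AddCommGroup W] [Module 𝕜 W]
    [AddCommMonoid β] [PartialOrder β] [SMul 𝕜 β]
    {s : Set W} {f : W → β} (hf : StrictConcaveOn 𝕜 s f) (g : V →ᵃ[𝕜] W)
    (hg : Function.Injective g) : StrictConcaveOn 𝕜 (g ⁻¹' s) (f ∘ g) := by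
  refine ⟨hf.1.affine_preimage g, fun x hx y hy hxy a b ha hb hab => ?_⟩
  simpa only [Function.comp_apply, Convex.combo_affine_apply hab] using
    hf.2 hx hy (hg.ne hxy) ha hb hab

theorem StrictConcaveOn.lt_add_fderiv_sub {V : Type*} [NormedAddCommGroup V] [NormedSpace ℝ V]
    {s : Set V} {g : V → ℝ} {g' : V →L[ℝ] ℝ} (hg : StrictConcaveOn ℝ s g) {x y : V}
    (hx : x ∈ s) (hy : y ∈ s) (hxy : x ≠ y) (hg' : HasFDerivAt g g' x) :
    g y < g x + g' (y - x) := by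
  set γ : ℝ →ᵃ[ℝ] V := AffineMap.lineMap x y
  have hline : StrictConcaveOn ℝ (γ ⁻¹' s) (g ∘ γ) :=
    hg.comp_affineMap_of_injective γ (AffineMap.lineMap_injective ℝ hxy)
  have hderiv : HasDerivAt (g ∘ γ) (g' (y - x)) 0 :=
    (by simpa [γ] using hg' : HasFDerivAt g g' (γ 0)).comp_hasDerivAt 0
      AffineMap.hasDerivAt_lineMap
  have hslope := hline.slope_lt_of_hasDerivAt (x := 0) (y := 1) (by simpa [γ] using hx)
    (by simpa [γ] using hy) zero_lt_one hderiv
  simp only [slope, γ, Function.comp_apply, AffineMap.lineMap_apply_zero,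
    AffineMap.lineMap_apply_one, sub_zero, inv_one, vsub_eq_sub, one_smul] at hslope
  linarith

section LogDivergence

variable {V : Type*} [NormedAddCommGroup V] [InnerProductSpace ℝ V] [CompleteSpace V]
  {Ω : Set V} {α : ℝ} {φ : V → ℝ} {Dφ : V → V}

theorem exp_lt_exp_mul_one_add_inner
    (hconc : StrictConcaveOn ℝ Ω (fun ξ => exp (α * φ ξ))) {ξ ξ' : V} (hξ : ξ ∈ Ω)
    (hξ' : ξ' ∈ Ω) (hne : ξ ≠ ξ') (hφ : HasGradientAt φ (Dφ ξ') ξ') :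
    exp (α * φ ξ) < exp (α * φ ξ') * (1 + α * ⟪Dφ ξ', ξ - ξ'⟫) := by
  have hexp := (hφ.hasFDerivAt.const_mul α).exp
  have htangent := hconc.lt_add_fderiv_sub hξ' hξ hne.symm hexp
  simp only [smul_apply, InnerProductSpace.toDual_apply_apply, smul_eq_mul] at htangent
  linarith

theorem log_divergence_pos (hα : 0 < α)
    (hconc : StrictConcaveOn ℝ Ω (fun ξ => exp (α * φ ξ))) {ξ ξ' : V} (hξ : ξ ∈ Ω)
    (hξ' : ξ' ∈ Ω) (hne : ξ ≠ ξ') (hφ : HasGradientAt φ (Dφ ξ') ξ') :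
    0 < (1 / α) * log (1 + α * ⟪Dφ ξ', ξ - ξ'⟫) - (φ ξ - φ ξ') := by
  have hlt := exp_lt_exp_mul_one_add_inner hconc hξ hξ' hne hφ
  have hpos : 0 < 1 + α * ⟪Dφ ξ', ξ - ξ'⟫ :=
    pos_of_mul_pos_right ((exp_pos _).trans hlt) (exp_pos _).le
  have hlog : α * (φ ξ - φ ξ') < log (1 + α * ⟪Dφ ξ', ξ - ξ'⟫) := by
    rw [lt_log_iff_exp_lt hpos, mul_sub, exp_sub, div_lt_iff₀ (exp_pos _)]
    exact hlt.trans_eq (mul_comm _ _)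
  rw [sub_pos, one_div, inv_mul_eq_div, lt_div_iff₀ hα, mul_comm]
  exact hlog

end LogDivergence

theorem log_divergence_eq_zero_iff_general (n : ℕ) (Ω : Set (E n))
    (α : ℝ) (hα : 0 < α)
    (φ : E n → ℝ) (Dφ : E n → E n)
    (hdiff : ∀ ξ ∈ Ω, HasGradientAt φ (Dφ ξ) ξ)
    (hconc : StrictConcaveOn ℝ Ω (fun ξ => Real.exp (α * φ ξ))) :
    ∀ ξ ∈ Ω, ∀ ξ' ∈ Ω,
      ((1 / α) * Real.log (1 + α * ⟪Dφ ξ', ξ - ξ'⟫) - (φ ξ - φ ξ') = 0 ↔ ξ = ξ') := by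
  intro ξ hξ ξ' hξ'
  refine ⟨fun hL => ?_, fun h => by simp [h]⟩
  by_contra hne
  exact (log_divergence_pos hα hconc hξ hξ' hne (hdiff ξ' hξ')).ne' hL

theorem log_divergence_eq_zero_iff (n : ℕ) (Ω : Set (E n))
    (hΩopen : IsOpen Ω) (hΩconv : Convex ℝ Ω)
    (α : ℝ) (hα : 0 < α)
    (φ : E n → ℝ) (Dφ : E n → E n)
    (hdiff : ∀ ξ ∈ Ω, HasGradientAt φ (Dφ ξ) ξ)
    (hconc : StrictConcaveOn ℝ Ω (fun ξ => Real.exp (α * φ ξ))) :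
    ∀ ξ ∈ Ω, ∀ ξ' ∈ Ω,
      ((1 / α) * Real.log (1 + α * ⟪Dφ ξ', ξ - ξ'⟫) - (φ ξ - φ ξ') = 0 ↔ ξ = ξ') :=
  log_divergence_eq_zero_iff_general n Ω α hα φ Dφ hdiff hconc
end

section
/- Let Ω ⊆ ℝⁿ be open convex, α > 0, and φ : Ω → ℝ differentiable with e^{αφ} concave. Define ϕ = −e^{αφ} (which is convex), κ(ξ) = −1/(α ϕ(ξ)) > 0, and T(x) = (e^{αx} − 1)/α. Then for all ξ, ξ' ∈ Ω: T(L^{(α)}_φ[ξ:ξ']) = κ(ξ) · B_ϕ[ξ:ξ'], where B_ϕ[ξ:ξ'] = ϕ(ξ) − ϕ(ξ') − ∇ϕ(ξ')·(ξ − ξ') is the Bregman divergence of ϕ. -/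
open Real Set
open scoped RealInnerProductSpace

/-!
Write `g = exp (α φ)` and `s = ⟪∇φ ξ', ξ - ξ'⟫`, so `ϕ = -g` and `∇ϕ = -α g ∇φ`. Since `ϕ` is
convex, its Bregman divergence is nonnegative, i.e. `g ξ ≤ g ξ' (1 + α s)`; in particular the
argument of the logarithm in `L^{(α)}_φ` is positive. Then `exp (α L) = (1 + α s) g ξ' / g ξ`,
and both sides of the identity equal `(g ξ' (1 + α s) - g ξ) / (α g ξ)`.
-/

theorem ConvexOn.add_fderiv_sub_le {F : Type*} [NormedAddCommGroup F] [NormedSpace ℝ F]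
    {s : Set F} {f : F → ℝ} {f' : F →L[ℝ] ℝ} {x y : F}
    (hf : ConvexOn ℝ s f) (hx : x ∈ s) (hy : y ∈ s) (hf' : HasFDerivAt f f' x) :
    f x + f' (y - x) ≤ f y := by
  set L : ℝ →ᵃ[ℝ] F := AffineMap.lineMap x y
  have hL0 : L 0 = x := AffineMap.lineMap_apply_zero x y
  have hL1 : L 1 = y := AffineMap.lineMap_apply_one x y
  have hL : ConvexOn ℝ (L ⁻¹' s) (f ∘ L) := hf.comp_affineMap L
  have hderiv : HasDerivAt (f ∘ L) (f' (y - x)) 0 :=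
    (hL0 ▸ hf').comp_hasDerivAt 0 AffineMap.hasDerivAt_lineMap
  have hslope := hL.le_slope_of_hasDerivAt (hL0.symm ▸ hx : L 0 ∈ s) (hL1.symm ▸ hy : L 1 ∈ s)
    zero_lt_one hderiv
  rw [slope_def_field, Function.comp_apply, Function.comp_apply, hL0, hL1, sub_zero, div_one]
    at hslope
  linarith

theorem HasGradientAt.neg_exp_const_mul {F : Type*} [NormedAddCommGroup F]
    [InnerProductSpace ℝ F] [CompleteSpace F] {f : F → ℝ} {f' x : F}
    (hf : HasGradientAt f f' x) (c : ℝ) :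
    HasGradientAt (fun y => -exp (c * f y)) (-(c * exp (c * f x)) • f') x := by
  rw [hasGradientAt_iff_hasFDerivAt] at hf ⊢
  have h := ((hf.const_mul c).exp).neg
  rwa [smul_smul, mul_comm (exp _), ← neg_smul, ← map_smul] at h

theorem exp_mul_log_divergence_sub_one_div {α u u' s : ℝ} (hα : α ≠ 0) (hs : 0 < 1 + α * s) :
    (exp (α * ((1 / α) * log (1 + α * s) - (u - u'))) - 1) / α
      = (exp (α * u') * (1 + α * s) - exp (α * u)) / (α * exp (α * u)) := by
  have hexp : exp (α * ((1 / α) * log (1 + α * s) - (u - u')))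
      = (1 + α * s) * exp (α * u') / exp (α * u) := by
    rw [mul_sub, ← mul_assoc, mul_one_div_cancel hα, one_mul, mul_sub, exp_sub, exp_sub,
      exp_log hs]
    field_simp
  rw [hexp]
  field_simp

theorem log_divergence_as_conformal_bregman_general (n : ℕ) (Ω : Set (E n))
    (α : ℝ) (hα : 0 < α)
    (φ : E n → ℝ) (Dφ : E n → E n)
    (hdiff : ∀ ξ ∈ Ω, HasGradientAt φ (Dφ ξ) ξ)
    (hconc : ConcaveOn ℝ Ω (fun ξ => Real.exp (α * φ ξ)))
    (ϕ : E n → ℝ) (hϕ : ∀ ξ, ϕ ξ = -Real.exp (α * φ ξ))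
    (Dϕ : E n → E n)
    (hDϕ : ∀ ξ ∈ Ω, HasGradientAt ϕ (Dϕ ξ) ξ)
    (κ : E n → ℝ) (hκ : ∀ ξ, κ ξ = -1 / (α * ϕ ξ)) :
    ∀ ξ ∈ Ω, ∀ ξ' ∈ Ω,
      (Real.exp (α * ((1 / α) * Real.log (1 + α * ⟪Dφ ξ', ξ - ξ'⟫) - (φ ξ - φ ξ'))) - 1) / α
        = κ ξ * (ϕ ξ - ϕ ξ' - ⟪Dϕ ξ', ξ - ξ'⟫) := by
  intro ξ hξ ξ' hξ'
  obtain rfl : ϕ = fun ξ => -exp (α * φ ξ) := funext hϕ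
  have hDϕξ' : Dϕ ξ' = -(α * exp (α * φ ξ')) • Dφ ξ' :=
    (hDϕ ξ' hξ').unique ((hdiff ξ' hξ').neg_exp_const_mul α)
  have hbregman := hconc.neg.add_fderiv_sub_le hξ' hξ (hDϕ ξ' hξ').hasFDerivAt
  simp only [InnerProductSpace.toDual_apply_apply, hDϕξ', real_inner_smul_left, Pi.neg_apply]
    at hbregman
  have hpos : 0 < 1 + α * ⟪Dφ ξ', ξ - ξ'⟫ := by
    have hgξ := exp_pos (α * φ ξ)
    have hgξ' := exp_pos (α * φ ξ')
    nlinarith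
  rw [exp_mul_log_divergence_sub_one_div hα.ne' hpos, hκ, hDϕξ', real_inner_smul_left]
  field_simp
  ring

theorem log_divergence_as_conformal_bregman (n : ℕ) (Ω : Set (E n))
    (hΩopen : IsOpen Ω) (hΩconv : Convex ℝ Ω)
    (α : ℝ) (hα : 0 < α)
    (φ : E n → ℝ) (Dφ : E n → E n)
    (hdiff : ∀ ξ ∈ Ω, HasGradientAt φ (Dφ ξ) ξ)
    (hconc : ConcaveOn ℝ Ω (fun ξ => Real.exp (α * φ ξ)))
    (ϕ : E n → ℝ) (hϕ : ∀ ξ, ϕ ξ = -Real.exp (α * φ ξ))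
    (Dϕ : E n → E n)
    (hDϕ : ∀ ξ ∈ Ω, HasGradientAt ϕ (Dϕ ξ) ξ)
    (κ : E n → ℝ) (hκ : ∀ ξ, κ ξ = -1 / (α * ϕ ξ)) :
    ∀ ξ ∈ Ω, ∀ ξ' ∈ Ω,
      (Real.exp (α * ((1 / α) * Real.log (1 + α * ⟪Dφ ξ', ξ - ξ'⟫) - (φ ξ - φ ξ'))) - 1) / α
        = κ ξ * (ϕ ξ - ϕ ξ' - ⟪Dϕ ξ', ξ - ξ'⟫) :=
  log_divergence_as_conformal_bregman_general n Ω α hα φ Dφ hdiff hconc ϕ hϕ Dϕ hDϕ κ hκ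
end

section
/- Self-dual representation of the L^{(α)}-divergence: let α > 0 and φ : Ω → ℝ be smooth with e^{αφ} concave on the open convex set Ω ⊆ ℝⁿ, and assume 1 − α∇φ(ξ)·ξ > 0 on Ω. Define the dual coordinate η(ξ) = ∇φ(ξ)/(1 − α∇φ(ξ)·ξ) and the α-conjugate ψ(η(ξ)) = (1/α)log(1 + α ξ·η(ξ)) − φ(ξ). Then for all ξ, ξ' ∈ Ω: L^{(α)}_φ[ξ:ξ'] = (1/α) log(1 + α ξ·η(ξ')) − φ(ξ) − ψ(η(ξ')). -/
open Real Set
open scoped RealInnerProductSpace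

/-- Gradient inequality for concave functions. -/
lemma concave_grad_ineq {n : ℕ} {Ω : Set (E n)} {f : E n → ℝ}
    (hconc : ConcaveOn ℝ Ω f) {g ξ' : E n} (hg : HasGradientAt f g ξ')
    {ξ : E n} (hξ : ξ ∈ Ω) (hξ' : ξ' ∈ Ω) :
    f ξ ≤ f ξ' + ⟪g, ξ - ξ'⟫ := by
  set v := ξ - ξ' with hv
  have hcurve : HasDerivAt (fun t : ℝ => ξ' + t • v) v 0 := by
    simpa using ((hasDerivAt_id (0:ℝ)).smul_const v).const_add ξ'
  have hg' : HasFDerivAt f ((InnerProductSpace.toDual ℝ (E n)) g) (ξ' + (0:ℝ) • v) := by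
    simpa using hg.hasFDerivAt
  have hderiv : HasDerivAt (fun t : ℝ => f (ξ' + t • v)) ⟪g, v⟫ 0 := by
    simpa [InnerProductSpace.toDual_apply_apply, Function.comp_def] using hg'.comp_hasDerivAt 0 hcurve
  have hslope : ∀ t : ℝ, t ∈ Ioc (0:ℝ) 1 →
      f ξ - f ξ' ≤ slope (fun t : ℝ => f (ξ' + t • v)) 0 t := by
    intro t ht
    have hmem : ξ' + t • v = (1 - t) • ξ' + t • ξ := by
      simp [hv, smul_sub, sub_smul]; module
    have hcomb := hconc.2 hξ' hξ (by linarith [ht.2] : (0:ℝ) ≤ 1 - t) ht.1.le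
      (by ring : (1 - t) + t = 1)
    rw [← hmem] at hcomb
    rw [slope_def_field]
    rw [le_div_iff₀ (by simpa using ht.1)]
    simp only [zero_smul, add_zero, smul_eq_mul] at hcomb ⊢
    nlinarith [hcomb]
  have htend : Filter.Tendsto (slope (fun t : ℝ => f (ξ' + t • v)) 0)
      (nhdsWithin 0 (Ioi 0)) (nhds ⟪g, v⟫) :=
    (hasDerivAt_iff_tendsto_slope.1 hderiv).mono_left
      (nhdsWithin_mono _ (fun x hx => ne_of_gt hx))
  have : f ξ - f ξ' ≤ ⟪g, v⟫ := by
    refine ge_of_tendsto htend ?_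
    filter_upwards [Ioc_mem_nhdsGT_of_mem (by simp : (0:ℝ) ∈ Ico (0:ℝ) 1)] with t ht
    exact hslope t ht
  linarith

theorem log_divergence_self_dual (n : ℕ) (Ω : Set (E n))
    (hΩopen : IsOpen Ω) (hΩconv : Convex ℝ Ω)
    (α : ℝ) (hα : 0 < α)
    (φ : E n → ℝ) (hsmooth : ContDiffOn ℝ (⊤ : ℕ∞) φ Ω)
    (Dφ : E n → E n) (hgrad : ∀ ξ ∈ Ω, HasGradientAt φ (Dφ ξ) ξ)
    (hconc : ConcaveOn ℝ Ω (fun ξ => Real.exp (α * φ ξ)))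
    (hdom : ∀ ξ ∈ Ω, 0 < 1 - α * ⟪Dφ ξ, ξ⟫)
    (η : E n → E n)
    (hη : ∀ ξ ∈ Ω, η ξ = (1 - α * ⟪Dφ ξ, ξ⟫)⁻¹ • Dφ ξ)
    (ψ : E n → ℝ)
    (hψ : ∀ ξ ∈ Ω, ψ (η ξ) = (1 / α) * Real.log (1 + α * ⟪ξ, η ξ⟫) - φ ξ) :
    ∀ ξ ∈ Ω, ∀ ξ' ∈ Ω,
      (1 / α) * Real.log (1 + α * ⟪Dφ ξ', ξ - ξ'⟫) - (φ ξ - φ ξ')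
        = (1 / α) * Real.log (1 + α * ⟪ξ, η ξ'⟫) - φ ξ - ψ (η ξ') := by
  intro ξ hξ ξ' hξ'
  have hgexp : HasGradientAt (fun ζ => Real.exp (α * φ ζ))
      ((α * Real.exp (α * φ ξ')) • Dφ ξ') ξ' := by
    have h2 : HasDerivAt (fun x : ℝ => Real.exp (α * x)) (α * Real.exp (α * φ ξ')) (φ ξ') := by
      simpa [mul_comm, Function.comp_def] using (Real.hasDerivAt_exp (α * φ ξ')).comp (φ ξ')
        ((hasDerivAt_id (φ ξ')).const_mul α)
    have h3 := h2.comp_hasFDerivAt ξ' (hgrad ξ' hξ').hasFDerivAt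
    rw [HasGradientAt, HasGradientAtFilter, map_smul]
    exact h3
  have key := concave_grad_ineq hconc hgexp hξ hξ'
  rw [inner_smul_left] at key
  have key' : Real.exp (α * φ ξ)
      ≤ Real.exp (α * φ ξ') + (α * Real.exp (α * φ ξ')) * ⟪Dφ ξ', ξ - ξ'⟫ := by
    simpa using key
  have hA : 0 < 1 + α * ⟪Dφ ξ', ξ - ξ'⟫ := by
    nlinarith [Real.exp_pos (α * φ ξ), Real.exp_pos (α * φ ξ')]
  have hc : (0:ℝ) < 1 - α * ⟪Dφ ξ', ξ'⟫ := hdom ξ' hξ'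
  have hcne : (1 - α * ⟪Dφ ξ', ξ'⟫) ≠ 0 := hc.ne'
  have hinner1 : ⟪ξ, η ξ'⟫
      = (1 - α * ⟪Dφ ξ', ξ'⟫)⁻¹ * (⟪Dφ ξ', ξ'⟫ + ⟪Dφ ξ', ξ - ξ'⟫) := by
    rw [hη ξ' hξ', real_inner_smul_right, real_inner_comm (Dφ ξ') ξ]
    congr 1
    rw [inner_sub_right]
    ring
  have hinner2 : ⟪ξ', η ξ'⟫ = (1 - α * ⟪Dφ ξ', ξ'⟫)⁻¹ * ⟪Dφ ξ', ξ'⟫ := by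
    rw [hη ξ' hξ', real_inner_smul_right, real_inner_comm (Dφ ξ') ξ']
  have he1 : 1 + α * ⟪ξ, η ξ'⟫
      = (1 - α * ⟪Dφ ξ', ξ'⟫)⁻¹ * (1 + α * ⟪Dφ ξ', ξ - ξ'⟫) := by
    rw [hinner1]
    generalize (⟪Dφ ξ', ξ - ξ'⟫ : ℝ) = A
    generalize hBB : (⟪Dφ ξ', ξ'⟫ : ℝ) = B at hcne ⊢
    field_simp
    ring
  have he2 : 1 + α * ⟪ξ', η ξ'⟫ = (1 - α * ⟪Dφ ξ', ξ'⟫)⁻¹ := by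
    rw [hinner2]
    generalize hBB : (⟪Dφ ξ', ξ'⟫ : ℝ) = B at hcne ⊢
    field_simp
    ring
  rw [hψ ξ' hξ', he1, he2, Real.log_mul (by positivity) hA.ne', Real.log_inv]
  ring
end

section
/- Curvature formula for conformal divergence: let ϕ be smooth strictly convex on open convex Ω ⊆ ℝⁿ and κ > 0 smooth. The primal connection induced by D_{ϕ,κ}[ξ:ξ'] = κ(ξ)B_ϕ[ξ:ξ'] has Christoffel symbols Γ_{ij}{}^k(ξ) = (∂_i κ/κ) δ_j^k + (∂_j κ/κ) δ_i^k in the ξ-coordinates, and its curvature tensor is R_{ijk}{}^ℓ(ξ) = κ(ξ)(∂_j∂_k(1/κ)(ξ) δ_i^ℓ − ∂_i∂_k(1/κ)(ξ) δ_j^ℓ). -/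
open Real Set
open scoped RealInnerProductSpace

/-- Partial derivative `∂_i f(ξ)`. -/
noncomputable def pd {n : ℕ} (f : E n → ℝ) (i : Fin n) (ξ : E n) : ℝ :=
  fderiv ℝ f ξ (EuclideanSpace.single i 1)

/-- Second partial derivative `∂_i ∂_j f(ξ)`. -/
noncomputable def hess {n : ℕ} (f : E n → ℝ) (i j : Fin n) (ξ : E n) : ℝ :=
  fderiv ℝ (fun x => fderiv ℝ f x (EuclideanSpace.single j 1)) ξ (EuclideanSpace.single i 1)

/-- The primal connection coefficients induced by a divergence `D`:
`Γ_{ijk}(ξ) = -∂_{ξ^i}∂_{ξ^j}∂_{ξ'^k} D[ξ:ξ']` evaluated at `ξ' = ξ`. -/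
noncomputable def divChristoffel {n : ℕ} (D : E n → E n → ℝ) (i j k : Fin n) (ξ : E n) : ℝ :=
  -(fderiv ℝ (fun x =>
      fderiv ℝ (fun x' => fderiv ℝ (fun y => D x' y) ξ (EuclideanSpace.single k 1)) x
        (EuclideanSpace.single j 1)) ξ
      (EuclideanSpace.single i 1))

/-- The claimed Christoffel symbols `Γ_{ij}{}^k = (∂_i κ/κ)δ_j^k + (∂_j κ/κ)δ_i^k`. -/
noncomputable def confGamma {n : ℕ} (κ : E n → ℝ) (i j k : Fin n) (ξ : E n) : ℝ :=
  (pd κ i ξ / κ ξ) * (if j = k then 1 else 0) + (pd κ j ξ / κ ξ) * (if i = k then 1 else 0)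

/-- Curvature tensor of the connection with symbols `Γ_{ij}{}^k`:
`R_{ijk}{}^ℓ = ∂_iΓ_{jk}{}^ℓ − ∂_jΓ_{ik}{}^ℓ + Γ_{jk}{}^mΓ_{im}{}^ℓ − Γ_{ik}{}^mΓ_{jm}{}^ℓ`. -/
noncomputable def confCurvature {n : ℕ} (κ : E n → ℝ) (i j k l : Fin n) (ξ : E n) : ℝ :=
  pd (fun x => confGamma κ j k l x) i ξ - pd (fun x => confGamma κ i k l x) j ξ
    + ∑ m : Fin n, (confGamma κ j k m ξ * confGamma κ i m l ξ
        - confGamma κ i k m ξ * confGamma κ j m l ξ)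

set_option maxHeartbeats 1000000

noncomputable abbrev ee {n : ℕ} (i : Fin n) : E n := EuclideanSpace.single i 1

section helpers
variable {n : ℕ} {f : E n → ℝ}

lemma hasfd_pdv (hf : ContDiff ℝ (⊤ : ℕ∞) f) (v : E n) (x : E n) :
    HasFDerivAt (fun y => fderiv ℝ f y v) ((fderiv ℝ (fderiv ℝ f) x).flip v) x := by
  have h2 : HasFDerivAt (fderiv ℝ f) (fderiv ℝ (fderiv ℝ f) x) x :=
    (((hf.fderiv_right (m := 1) (WithTop.coe_le_coe.mpr le_top)).differentiable one_ne_zero) x).hasFDerivAt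
  have := h2.clm_apply (hasFDerivAt_const v x)
  simpa using this

lemma hess_eq (hf : ContDiff ℝ (⊤ : ℕ∞) f) (i j : Fin n) (ξ : E n) :
    hess f i j ξ = fderiv ℝ (fderiv ℝ f) ξ (ee i) (ee j) := by
  have := (hasfd_pdv hf (ee j) ξ).fderiv
  simp only [hess]
  rw [this]
  rfl

lemma hess_symm (hf : ContDiff ℝ (⊤ : ℕ∞) f) (i j : Fin n) (ξ : E n) :
    hess f i j ξ = hess f j i ξ := by
  rw [hess_eq hf, hess_eq hf]
  exact (hf.contDiffAt.isSymmSndFDerivAt (by rw [minSmoothness_of_isRCLikeNormedField]; exact WithTop.coe_le_coe.mpr le_top)) (ee i) (ee j)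

lemma hasFDerivAt_div' {g h : E n → ℝ} {g' h' : E n →L[ℝ] ℝ} {x : E n}
    (hg : HasFDerivAt g g' x) (hh : HasFDerivAt h h' x) (hx : h x ≠ 0) :
    HasFDerivAt (fun y => g y / h y)
      (((h x)⁻¹) • g' + (-(g x / h x ^ 2)) • h') x := by
  have hinv : HasFDerivAt (fun y => (h y)⁻¹) ((-(h x ^ 2)⁻¹) • h') x :=
    (hasDerivAt_inv hx).comp_hasFDerivAt x hh
  have := hg.mul hinv
  have heq : ∀ y : E n, g y / h y = g y * (h y)⁻¹ := fun y => div_eq_mul_inv _ _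
  simp only [heq]
  refine (show HasFDerivAt (fun y => g y * (h y)⁻¹) _ x from this).congr_fderiv ?_
  ext v
  simp only [ContinuousLinearMap.add_apply, ContinuousLinearMap.smul_apply, smul_eq_mul]
  ring

end helpers


lemma part1 {n : ℕ} {ϕ κ : E n → ℝ} (hϕ : ContDiff ℝ (⊤ : ℕ∞) ϕ) (hκ : ContDiff ℝ (⊤ : ℕ∞) κ)
    {ξ : E n} (hκ0 : κ ξ ≠ 0) (i j k : Fin n) :
    divChristoffel (fun x y => κ x * (ϕ x - ϕ y - fderiv ℝ ϕ y (x - y))) i j k ξ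
      = ∑ m : Fin n, confGamma κ i j m ξ * (κ ξ * hess ϕ m k ξ) := by
  set ℓ : E n →L[ℝ] ℝ := fderiv ℝ (fderiv ℝ ϕ) ξ (ee k) with hℓ
  have hκd := hκ.differentiable (by simp)
  have stepA : ∀ x' : E n,
      fderiv ℝ (fun y => κ x' * (ϕ x' - ϕ y - fderiv ℝ ϕ y (x' - y))) ξ (ee k)
        = -(κ x' * ℓ (x' - ξ)) := by
    intro x'
    have h1 : HasFDerivAt ϕ (fderiv ℝ ϕ ξ) ξ := ((hϕ.differentiable (by simp)) ξ).hasFDerivAt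
    have h2 : HasFDerivAt (fderiv ℝ ϕ) (fderiv ℝ (fderiv ℝ ϕ) ξ) ξ :=
      (((hϕ.fderiv_right (m := 1) (WithTop.coe_le_coe.mpr le_top)).differentiable one_ne_zero) ξ).hasFDerivAt
    have h3 : HasFDerivAt (fun y : E n => x' - y) (-(ContinuousLinearMap.id ℝ (E n))) ξ := by
      simpa using (hasFDerivAt_id ξ).const_sub x'
    have h4 := h2.clm_apply h3
    have h5 := (((hasFDerivAt_const (ϕ x') ξ).sub h1).sub h4).const_mul (κ x')
    rw [(show HasFDerivAt (fun y => κ x' * (ϕ x' - ϕ y - fderiv ℝ ϕ y (x' - y))) _ ξ from h5).fderiv]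
    simp [hℓ]
    ring
  have hlat : ∀ x : E n, HasFDerivAt (fun y : E n => ℓ (y - ξ)) ℓ x := by
    intro x
    have hsub : HasFDerivAt (fun y : E n => y - ξ) (ContinuousLinearMap.id ℝ (E n)) x :=
      (hasFDerivAt_id x).sub_const ξ
    have := ℓ.hasFDerivAt.comp x hsub
    simpa [Function.comp_def] using this
  have stepC : (fun x => fderiv ℝ (fun x' => -(κ x' * ℓ (x' - ξ))) x (ee j))
      = fun x => -(κ x * ℓ (ee j) + ℓ (x - ξ) * fderiv ℝ κ x (ee j)) := by
    funext x
    have hκx : HasFDerivAt κ (fderiv ℝ κ x) x := (hκd x).hasFDerivAt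
    have := ((hκx.mul (hlat x)).neg).fderiv
    rw [show fderiv ℝ (fun x' => -(κ x' * ℓ (x' - ξ))) x = _ from this]
    simp
  have hpdj : HasFDerivAt (fun x => fderiv ℝ κ x (ee j))
      ((fderiv ℝ (fderiv ℝ κ) ξ).flip (ee j)) ξ := hasfd_pdv hκ (ee j) ξ
  have hκξ : HasFDerivAt κ (fderiv ℝ κ ξ) ξ := (hκd ξ).hasFDerivAt
  have hD := (((hκξ.mul_const (ℓ (ee j))).add ((hlat ξ).mul hpdj)).neg).fderiv
  have key : divChristoffel (fun x y => κ x * (ϕ x - ϕ y - fderiv ℝ ϕ y (x - y))) i j k ξ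
      = pd κ i ξ * ℓ (ee j) + pd κ j ξ * ℓ (ee i) := by
    unfold divChristoffel
    have hmid : (fun x' => fderiv ℝ
        (fun y => κ x' * (ϕ x' - ϕ y - fderiv ℝ ϕ y (x' - y))) ξ (EuclideanSpace.single k 1))
        = fun x' => -(κ x' * ℓ (x' - ξ)) := funext stepA
    rw [hmid]
    have : (fun x => fderiv ℝ (fun x' => -(κ x' * ℓ (x' - ξ))) x (EuclideanSpace.single j 1))
        = fun x => -(κ x * ℓ (ee j) + ℓ (x - ξ) * fderiv ℝ κ x (ee j)) := stepC
    rw [this, show fderiv ℝ (fun x => -(κ x * ℓ (ee j) + ℓ (x - ξ) * fderiv ℝ κ x (ee j))) ξ = _ from hD]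
    simp [pd]
    ring
  rw [key]
  have hl_i : ℓ (ee i) = hess ϕ i k ξ := by
    rw [hess_symm hϕ, hess_eq hϕ]
  have hl_j : ℓ (ee j) = hess ϕ j k ξ := by
    rw [hess_symm hϕ, hess_eq hϕ]
  rw [hl_i, hl_j]
  simp only [confGamma, add_mul, ite_mul, one_mul, zero_mul, Finset.sum_add_distrib,
    mul_ite, mul_one, mul_zero, Finset.sum_ite_eq, Finset.mem_univ, if_true]
  field_simp

lemma part2 {n : ℕ} {κ : E n → ℝ} (hκ : ContDiff ℝ (⊤ : ℕ∞) κ) {ξ : E n} (hκ0 : κ ξ ≠ 0)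
    (i j k l : Fin n) :
    confCurvature κ i j k l ξ
      = κ ξ * (hess (fun x => 1 / κ x) j k ξ * (if i = l then (1:ℝ) else 0)
          - hess (fun x => 1 / κ x) i k ξ * (if j = l then 1 else 0)) := by
  have hκd := hκ.differentiable (by simp)
  have hκξ : HasFDerivAt κ (fderiv ℝ κ ξ) ξ := (hκd ξ).hasFDerivAt
  -- hessian of 1/κ
  have hess1κ : ∀ a b : Fin n, hess (fun x => 1 / κ x) a b ξ
      = (2 * pd κ a ξ * pd κ b ξ / κ ξ - hess κ a b ξ) / κ ξ ^ 2 := by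
    intro a b
    have hne : ∀ᶠ x in nhds ξ, κ x ≠ 0 :=
      (hκ.continuous.continuousAt).eventually_ne hκ0
    have ev : (fun x => fderiv ℝ (fun y => 1 / κ y) x (ee b))
        =ᶠ[nhds ξ] fun x => -(fderiv ℝ κ x (ee b) / (κ x * κ x)) := by
      filter_upwards [hne] with x hx
      have hd := hasFDerivAt_div' (hasFDerivAt_const (1:ℝ) x) ((hκd x).hasFDerivAt) hx
      rw [hd.fderiv]
      simp only [ContinuousLinearMap.add_apply, ContinuousLinearMap.smul_apply, smul_eq_mul,
        ContinuousLinearMap.zero_apply, mul_zero, zero_add]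
      rw [pow_two]
      field_simp
    have hsq : HasFDerivAt (fun x => κ x * κ x)
        (κ ξ • fderiv ℝ κ ξ + κ ξ • fderiv ℝ κ ξ) ξ := hκξ.mul hκξ
    have hsq0 : κ ξ * κ ξ ≠ 0 := mul_ne_zero hκ0 hκ0
    have hcomp := ((hasFDerivAt_div' (hasfd_pdv hκ (ee b) ξ) hsq hsq0).neg).fderiv
    have : hess (fun x => 1 / κ x) a b ξ
        = fderiv ℝ (fun x => -(fderiv ℝ κ x (ee b) / (κ x * κ x))) ξ (ee a) := by
      simp only [hess]
      rw [ev.fderiv_eq]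
    rw [this, show fderiv ℝ (fun x => -(fderiv ℝ κ x (ee b) / (κ x * κ x))) ξ = _ from hcomp]
    have hKab : (fderiv ℝ (fderiv ℝ κ) ξ).flip (ee b) (ee a) = hess κ a b ξ := by
      rw [hess_eq hκ]; rfl
    simp only [ContinuousLinearMap.neg_apply, ContinuousLinearMap.add_apply,
      ContinuousLinearMap.smul_apply, smul_eq_mul]
    rw [hKab]
    simp only [pd]
    field_simp
    ring
  -- derivative of confGamma
  have hgam : ∀ a b c d : Fin n, pd (fun x => confGamma κ a b c x) d ξ =
      ((κ ξ * hess κ d a ξ - pd κ a ξ * pd κ d ξ) / κ ξ ^ 2) * (if b = c then (1:ℝ) else 0)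
    + ((κ ξ * hess κ d b ξ - pd κ b ξ * pd κ d ξ) / κ ξ ^ 2) * (if a = c then (1:ℝ) else 0) := by
    intro a b c d
    have hq : ∀ a : Fin n, HasFDerivAt (fun x => fderiv ℝ κ x (ee a) / κ x)
        ((κ ξ)⁻¹ • ((fderiv ℝ (fderiv ℝ κ) ξ).flip (ee a))
          + (-(fderiv ℝ κ ξ (ee a) / κ ξ ^ 2)) • fderiv ℝ κ ξ) ξ :=
      fun a => hasFDerivAt_div' (hasfd_pdv hκ (ee a) ξ) hκξ hκ0
    have h := ((hq a).mul_const (if b = c then (1:ℝ) else 0)).add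
      ((hq b).mul_const (if a = c then (1:ℝ) else 0))
    have hfun : (fun x => confGamma κ a b c x) = fun x =>
        fderiv ℝ κ x (ee a) / κ x * (if b = c then (1:ℝ) else 0)
          + fderiv ℝ κ x (ee b) / κ x * (if a = c then (1:ℝ) else 0) := rfl
    show fderiv ℝ (fun x => confGamma κ a b c x) ξ (ee d) = _
    rw [hfun, (show HasFDerivAt (fun x => fderiv ℝ κ x (ee a) / κ x * (if b = c then (1:ℝ) else 0)
          + fderiv ℝ κ x (ee b) / κ x * (if a = c then (1:ℝ) else 0)) _ ξ from h).fderiv]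
    have hKa : (fderiv ℝ (fderiv ℝ κ) ξ).flip (ee a) (ee d) = hess κ d a ξ := by
      rw [hess_eq hκ]; rfl
    have hKb : (fderiv ℝ (fderiv ℝ κ) ξ).flip (ee b) (ee d) = hess κ d b ξ := by
      rw [hess_eq hκ]; rfl
    simp only [ContinuousLinearMap.add_apply, ContinuousLinearMap.smul_apply, smul_eq_mul]
    rw [hKa, hKb]
    simp only [pd]
    by_cases hbc : b = c <;> by_cases hac : a = c <;>
      simp only [hbc, hac, if_true, if_false, ite_true, ite_false] <;>
      field_simp <;> ring
  -- the quadratic sum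
  have sum_gamma : ∀ p q r s : Fin n,
      ∑ m : Fin n, confGamma κ p q m ξ * confGamma κ r m s ξ
      = (pd κ p ξ / κ ξ) * (pd κ r ξ / κ ξ) * (if q = s then (1:ℝ) else 0)
        + 2 * ((pd κ p ξ / κ ξ) * (pd κ q ξ / κ ξ)) * (if r = s then (1:ℝ) else 0)
        + (pd κ q ξ / κ ξ) * (pd κ r ξ / κ ξ) * (if p = s then (1:ℝ) else 0) := by
    intro p q r s
    by_cases hrs : r = s <;> by_cases hqs : q = s <;> by_cases hps : p = s <;>
      simp only [confGamma, hrs, hqs, hps, if_true, if_false, ite_true, ite_false,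
        add_mul, mul_add, mul_ite, ite_mul, mul_one, mul_zero, one_mul, zero_mul,
        add_zero, zero_add, Finset.sum_add_distrib, Finset.sum_ite_eq, Finset.sum_ite_eq',
        Finset.mem_univ, Finset.sum_const_zero] <;>
      ring
  have hsum : ∑ m : Fin n, (confGamma κ j k m ξ * confGamma κ i m l ξ
        - confGamma κ i k m ξ * confGamma κ j m l ξ)
      = (pd κ j ξ / κ ξ) * (pd κ k ξ / κ ξ) * (if i = l then (1:ℝ) else 0)
        - (pd κ i ξ / κ ξ) * (pd κ k ξ / κ ξ) * (if j = l then (1:ℝ) else 0) := by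
    rw [Finset.sum_sub_distrib, sum_gamma, sum_gamma]
    ring
  rw [confCurvature, hgam, hgam, hsum, hess1κ, hess1κ,
    hess_symm hκ j i ξ]
  set K := κ ξ with hK
  set Pi := pd κ i ξ with hPi
  set Pj := pd κ j ξ with hPj
  set Pk := pd κ k ξ with hPk
  set Hij := hess κ i j ξ with hHij
  set Hik := hess κ i k ξ with hHik
  set Hjk := hess κ j k ξ with hHjk
  clear_value K Pi Pj Pk Hij Hik Hjk
  by_cases hil : i = l <;> by_cases hjl : j = l <;> by_cases hkl : k = l <;>
    simp only [hil, hjl, hkl, if_true, if_false, ite_true, ite_false] <;>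
    field_simp <;> ring

theorem conformal_divergence_curvature (n : ℕ) (Ω : Set (E n))
    (hΩopen : IsOpen Ω) (hΩconv : Convex ℝ Ω)
    (ϕ : E n → ℝ) (hϕsmooth : ContDiff ℝ (⊤ : ℕ∞) ϕ) (hconv : StrictConvexOn ℝ Ω ϕ)
    (κ : E n → ℝ) (hκsmooth : ContDiff ℝ (⊤ : ℕ∞) κ) (hκpos : ∀ ξ ∈ Ω, 0 < κ ξ) :
    ∀ ξ ∈ Ω, ∀ i j k l : Fin n,
      (divChristoffel
          (fun x y => κ x * (ϕ x - ϕ y - fderiv ℝ ϕ y (x - y))) i j k ξ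
        = ∑ m : Fin n, confGamma κ i j m ξ * (κ ξ * hess ϕ m k ξ)) ∧
      (confCurvature κ i j k l ξ
        = κ ξ * (hess (fun x => 1 / κ x) j k ξ * (if i = l then 1 else 0)
            - hess (fun x => 1 / κ x) i k ξ * (if j = l then 1 else 0))) := by
  intro ξ hξ i j k l
  have hκ0 : κ ξ ≠ 0 := (hκpos ξ hξ).ne'
  exact ⟨part1 hϕsmooth hκsmooth hκ0 i j k, part2 hκsmooth hκ0 i j k l⟩
end
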